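/- In the patch exploration sampling setting, for every deterministic n ≥ 0, P(Y_{I∖𝒜_n} ∈ · | U_0,…,U_{n−1}) = P(X_{I∖𝒜_n} ∈ · | X_{𝒜_n} = Y_{𝒜_n}) almost surely. -/

import Mathlib

/-!
Write `C_n = {X = Y_n on 𝒜_n}` and `g_n = P(X = η off 𝒜_n | C_n)`. Conditionally on
`U_0, …, U_n`, step `n + 1` samples `Y` on `𝒱_{n+1} = 𝒜_{n+1} ∖ 𝒜_n` from
`P(X_{𝒱_{n+1}} ∈ · | C_n)` using the fresh uniform `U_{n+1}`. Integrating
`1{Y = η on 𝒱_{n+1}} · g_{n+1}` over `U_{n+1}` therefore gives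
`P(X = η on 𝒱_{n+1} | C_n) · P(X = η off 𝒜_{n+1} | C_n, X = η on 𝒱_{n+1}) = g_n`
by the chain rule for conditional probabilities, and the theorem follows by backward induction
from `n ≥ T_*`, where both sides only record whether `C_n` has positive probability. That event
is carried through the induction and discarded at the end: at `n = 0`, summing the identity
over `η` shows that it has probability one.
-/

open MeasureTheory ProbabilityTheory
open scoped ENNReal

noncomputable section

/-- The configuration `Y` built by the patch exploration after `k` steps: at step `k+1`
the coordinates in `𝒱_{k+1} = 𝒜_{k+1} ∖ 𝒜_k` are sampled using the sampling function
`F` applied to the uniform variable `u (k+1)`, conditionally on the already explored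
configuration. -/
def patchY {I : Type*} [DecidableEq I] {𝒳 : I → Type*}
    (A : ℕ → (ℕ → ℝ) → Finset I)
    (F : Finset I → Finset I → (∀ x, 𝒳 x) → ℝ → ∀ x, 𝒳 x)
    (y₀ : ∀ x, 𝒳 x) (u : ℕ → ℝ) : ℕ → ∀ x, 𝒳 x
  | 0 => y₀
  | k + 1 => fun x =>
      if x ∈ A (k + 1) u \ A k u then
        F (A k u) (A (k + 1) u \ A k u) (patchY A F y₀ u k) (u (k + 1)) x
      else patchY A F y₀ u k x

open Function

namespace MeasureTheory.Measure

variable {ι : Type*} [DecidableEq ι] {X : ι → Type*} [∀ i, MeasurableSpace (X i)]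
  (μ : ∀ i, Measure (X i)) [∀ i, IsProbabilityMeasure (μ i)]

theorem infinitePi_prod_map_update (i : ι) :
    ((infinitePi μ).prod (μ i)).map (fun p => update p.1 i p.2) = infinitePi μ := by
  refine eq_infinitePi _ fun s t ht => ?_
  have hpre : (fun p : (∀ j, X j) × X i => update p.1 i p.2) ⁻¹' Set.pi s t
      = Set.pi (s.erase i) t ×ˢ {x | i ∈ s → x ∈ t i} := by
    ext ⟨u, x⟩
    simp only [Set.mem_preimage, Set.mem_pi, Finset.mem_coe, Finset.mem_erase, Set.mem_prod,
      Set.mem_ofPred_eq]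
    constructor
    · intro h
      refine ⟨fun j ⟨hji, hj⟩ => ?_, fun hi => ?_⟩
      · simpa [update_of_ne hji] using h j hj
      · simpa using h i hi
    · rintro ⟨hu, hx⟩ j hj
      rcases eq_or_ne j i with rfl | hji
      · simpa using hx hj
      · simpa [update_of_ne hji] using hu j ⟨hji, hj⟩
  rw [map_apply measurable_update' (.pi s.countable_toSet fun j _ => ht j), hpre, prod_prod,
    infinitePi_pi _ fun j _ => ht j]
  by_cases hi : i ∈ s
  · simp only [hi, forall_const, Set.ofPred_mem_eq]
    exact Finset.prod_erase_mul s _ hi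
  · simp [hi]

theorem lintegral_infinitePi_eq_lintegral_update (i : ι) {f : (∀ j, X j) → ℝ≥0∞}
    (hf : Measurable f) :
    ∫⁻ u, f u ∂infinitePi μ = ∫⁻ u, ∫⁻ x, f (update u i x) ∂μ i ∂infinitePi μ := by
  conv_lhs => rw [← infinitePi_prod_map_update μ i]
  rw [lintegral_map hf measurable_update']
  exact lintegral_prod (fun p => f (update p.1 i p.2)) (hf.comp measurable_update').aemeasurable

end MeasureTheory.Measure

instance isProbabilityMeasure_restrict_Ico_zero_one :
    IsProbabilityMeasure (volume.restrict (Set.Ico (0 : ℝ) 1)) :=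
  ⟨by simp⟩

abbrev uniformSeq : Measure (ℕ → ℝ) :=
  Measure.infinitePi fun _ => volume.restrict (Set.Ico (0 : ℝ) 1)

section CondProbOff

variable {I : Type*} {𝒳 : I → Type*}

theorem setOf_forall_mem_eq_piecewise [DecidableEq I] {Λ B : Finset I} (hΛB : Λ ⊆ B)
    (ξ η : ∀ x, 𝒳 x) :
    {σ : ∀ x, 𝒳 x | ∀ x ∈ B, σ x = (B \ Λ).piecewise η ξ x}
      = {σ | ∀ x ∈ Λ, σ x = ξ x} ∩ {σ | ∀ x ∈ B \ Λ, σ x = η x} := by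
  ext σ
  simp only [Set.mem_ofPred_eq, Set.mem_inter_iff, Finset.mem_sdiff]
  constructor
  · intro h
    refine ⟨fun x hx => ?_, fun x hx => ?_⟩
    · simpa [Finset.piecewise, hx] using h x (hΛB hx)
    · simpa [Finset.piecewise, hx] using h x hx.1
  · rintro ⟨hΛ, hBΛ⟩ x hx
    by_cases hxΛ : x ∈ Λ
    · simpa [Finset.piecewise, hxΛ] using hΛ x hxΛ
    · simpa [Finset.piecewise, hx, hxΛ] using hBΛ x ⟨hx, hxΛ⟩

variable [∀ x, MeasurableSpace (𝒳 x)]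

def condProbOff (ν : Measure (∀ x, 𝒳 x)) (Λ : Finset I) (ξ η : ∀ x, 𝒳 x) : ℝ≥0∞ :=
  ν[|{σ | ∀ x ∈ Λ, σ x = ξ x}] {σ | ∀ x ∉ Λ, σ x = η x}

def IsConditionalSampler (ν : Measure (∀ x, 𝒳 x))
    (F : Finset I → Finset I → (∀ x, 𝒳 x) → ℝ → ∀ x, 𝒳 x) : Prop :=
  ∀ Λ J : Finset I, Disjoint Λ J → ∀ ξ : ∀ x, 𝒳 x, ν {σ | ∀ x ∈ Λ, σ x = ξ x} ≠ 0 →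
    ∀ η : ∀ x, 𝒳 x, volume {s ∈ Set.Ico (0 : ℝ) 1 | ∀ x ∈ J, F Λ J ξ s x = η x}
      = ν[|{σ | ∀ x ∈ Λ, σ x = ξ x}] {σ | ∀ x ∈ J, σ x = η x}

theorem measurableSet_setOf_forall_mem_eq [∀ x, MeasurableSingletonClass (𝒳 x)]
    (Λ : Finset I) (ξ : ∀ x, 𝒳 x) : MeasurableSet {σ : ∀ x, 𝒳 x | ∀ x ∈ Λ, σ x = ξ x} := by
  simp only [Set.ofPred_forall]
  exact .biInter Λ.countable_toSet fun x _ => measurable_pi_apply x (measurableSet_singleton _)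

theorem condProbOff_univ [Fintype I] [∀ x, MeasurableSingletonClass (𝒳 x)]
    {ν : Measure (∀ x, 𝒳 x)} [IsFiniteMeasure ν] (ξ η : ∀ x, 𝒳 x) :
    condProbOff ν Finset.univ ξ η = {ζ | ν {ζ} ≠ 0}.indicator 1 ξ := by
  have hξ : {σ : ∀ x, 𝒳 x | ∀ x ∈ Finset.univ, σ x = ξ x} = {ξ} := by
    ext σ
    simp [funext_iff]
  have hη : {σ : ∀ x, 𝒳 x | ∀ x ∉ Finset.univ, σ x = η x} = Set.univ := by
    ext σ
    simp
  rw [condProbOff, hξ, hη, cond_apply (measurableSet_singleton ξ), Set.inter_univ]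
  by_cases h : ν {ξ} = 0
  · simp [h]
  · simp [h, ENNReal.inv_mul_cancel h (measure_ne_top ν _)]

theorem condProbOff_empty {ν : Measure (∀ x, 𝒳 x)} [IsProbabilityMeasure ν] (ξ η : ∀ x, 𝒳 x) :
    condProbOff ν ∅ ξ η = ν {η} := by
  have hξ : {σ : ∀ x, 𝒳 x | ∀ x ∈ (∅ : Finset I), σ x = ξ x} = Set.univ := by
    ext σ
    simp
  have hη : {σ : ∀ x, 𝒳 x | ∀ x ∉ (∅ : Finset I), σ x = η x} = {η} := by
    ext σ
    simp [funext_iff]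
  rw [condProbOff, hξ, hη, cond_univ]

variable [DecidableEq I] [∀ x, MeasurableSingletonClass (𝒳 x)] {ν : Measure (∀ x, 𝒳 x)}

theorem cond_mul_condProbOff_piecewise [IsFiniteMeasure ν] {Λ B : Finset I} (hΛB : Λ ⊆ B)
    (ξ η : ∀ x, 𝒳 x) :
    ν[{σ | ∀ x ∈ B \ Λ, σ x = η x} | {σ | ∀ x ∈ Λ, σ x = ξ x}]
        * condProbOff ν B ((B \ Λ).piecewise η ξ) η = condProbOff ν Λ ξ η := by
  have hoff : {σ : ∀ x, 𝒳 x | ∀ x ∉ Λ, σ x = η x}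
      = {σ | ∀ x ∈ B \ Λ, σ x = η x} ∩ {σ | ∀ x ∉ B, σ x = η x} := by
    ext σ
    simp only [Set.mem_ofPred_eq, Set.mem_inter_iff, Finset.mem_sdiff]
    exact ⟨fun h => ⟨fun x hx => h x hx.2, fun x hx => h x (fun hxΛ => hx (hΛB hxΛ))⟩,
      fun ⟨hBΛ, hB⟩ x hx => if hxB : x ∈ B then hBΛ x ⟨hxB, hx⟩ else hB x hxB⟩
  rw [condProbOff, condProbOff, setOf_forall_mem_eq_piecewise hΛB,
    ← cond_cond_eq_cond_inter (measurableSet_setOf_forall_mem_eq _ _)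
      (measurableSet_setOf_forall_mem_eq _ _), mul_comm,
    cond_mul_eq_inter (measurableSet_setOf_forall_mem_eq _ _), hoff]

theorem setLIntegral_indicator_condProbOff [IsFiniteMeasure ν]
    {F : Finset I → Finset I → (∀ x, 𝒳 x) → ℝ → ∀ x, 𝒳 x} (hF : IsConditionalSampler ν F)
    {Λ B : Finset I} (hΛB : Λ ⊆ B) (ξ η : ∀ x, 𝒳 x) (hFmeas : Measurable (F Λ (B \ Λ) ξ)) :
    ∫⁻ s in Set.Ico 0 1, {s | ∀ x ∈ B \ Λ, F Λ (B \ Λ) ξ s x = η x}.indicator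
        (fun _ => condProbOff ν B ((B \ Λ).piecewise η ξ) η) s
      = condProbOff ν Λ ξ η := by
  have hT : MeasurableSet {s | ∀ x ∈ B \ Λ, F Λ (B \ Λ) ξ s x = η x} :=
    hFmeas (measurableSet_setOf_forall_mem_eq (B \ Λ) η)
  rw [lintegral_indicator_const hT, Measure.restrict_apply hT,
    ← cond_mul_condProbOff_piecewise hΛB, mul_comm]
  by_cases hΛ : ν {σ | ∀ x ∈ Λ, σ x = ξ x} = 0
  · have hB : ν {σ | ∀ x ∈ B, σ x = (B \ Λ).piecewise η ξ x} = 0 := by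
      rw [setOf_forall_mem_eq_piecewise hΛB]
      exact measure_inter_null_of_null_left _ hΛ
    rw [condProbOff, cond_eq_zero_of_meas_eq_zero hB, Measure.coe_zero, Pi.zero_apply, mul_zero,
      mul_zero]
  · rw [Set.inter_comm, ← hF Λ (B \ Λ) Finset.disjoint_sdiff ξ hΛ η]
    rfl

end CondProbOff

section Deterministic

variable {I : Type*} [DecidableEq I] {𝒳 : I → Type*} {A : ℕ → (ℕ → ℝ) → Finset I}
  {F : Finset I → Finset I → (∀ x, 𝒳 x) → ℝ → ∀ x, 𝒳 x} {y₀ : ∀ x, 𝒳 x}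

theorem patchY_succ (u : ℕ → ℝ) (k : ℕ) :
    patchY A F y₀ u (k + 1) = (A (k + 1) u \ A k u).piecewise
      (F (A k u) (A (k + 1) u \ A k u) (patchY A F y₀ u k) (u (k + 1))) (patchY A F y₀ u k) :=
  rfl

theorem dependsOn_patchY (hA : ∀ k, DependsOn (A k) (Set.Iio k)) (k : ℕ) :
    DependsOn (fun u => patchY A F y₀ u k) (Set.Iic k) := by
  induction k with
  | zero => exact fun _ _ _ => rfl
  | succ k ih =>
    intro u u' h
    have hk : ∀ i ∈ Set.Iic k, u i = u' i := fun i hi =>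
      h i (Set.Iic_subset_Iic.2 k.le_succ hi)
    have hY : patchY A F y₀ u k = patchY A F y₀ u' k := ih hk
    change patchY A F y₀ u (k + 1) = patchY A F y₀ u' (k + 1)
    rw [patchY_succ, patchY_succ, (hA k).mono Set.Iio_subset_Iic_self hk,
      (hA (k + 1)).mono Set.Iio_subset_Iic_self h, hY, h (k + 1) Set.self_mem_Iic]

theorem patchY_apply_of_le (hAmono : ∀ k u, A k u ⊆ A (k + 1) u) (u : ℕ → ℝ) {m k : ℕ}
    (hmk : m ≤ k) {x : I} (hx : x ∈ A m u) : patchY A F y₀ u k x = patchY A F y₀ u m x := by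
  induction k, hmk using Nat.le_induction with
  | base => rfl
  | succ k hmk ih =>
    have hxk : x ∈ A k u := monotone_nat_of_le_succ (fun k => hAmono k u) hmk hx
    rw [patchY_succ, Finset.piecewise_eq_of_notMem _ _ _ fun h => (Finset.mem_sdiff.1 h).2 hxk,
      ih]

theorem exploration_update_succ (hA : ∀ k, DependsOn (A k) (Set.Iio k)) (u : ℕ → ℝ) (n : ℕ)
    (s : ℝ) :
    A n (update u (n + 1) s) = A n u ∧ A (n + 1) (update u (n + 1) s) = A (n + 1) u ∧
      patchY A F y₀ (update u (n + 1) s) (n + 1) = (A (n + 1) u \ A n u).piecewise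
        (F (A n u) (A (n + 1) u \ A n u) (patchY A F y₀ u n) s) (patchY A F y₀ u n) := by
  have hu : ∀ i ∈ Set.Iic n, update u (n + 1) s i = u i := fun i hi =>
    update_of_ne (by simp at hi; omega) _ _
  have hAn : A n (update u (n + 1) s) = A n u := (hA n).mono Set.Iio_subset_Iic_self hu
  have hAn1 : A (n + 1) (update u (n + 1) s) = A (n + 1) u :=
    hA (n + 1) fun i hi => hu i (Set.mem_Iic.2 (Nat.le_of_lt_succ hi))
  have hY : patchY A F y₀ (update u (n + 1) s) n = patchY A F y₀ u n := dependsOn_patchY hA n hu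
  refine ⟨hAn, hAn1, ?_⟩
  rw [patchY_succ, hAn, hAn1, hY, update_self]

theorem dependsOn_comp_patchY {β : Type*} (hA : ∀ k, DependsOn (A k) (Set.Iio k)) (n : ℕ)
    (f : Finset I → Finset I → (∀ x, 𝒳 x) → β) :
    DependsOn (fun u => f (A n u) (A (n + 1) u) (patchY A F y₀ u (n + 1))) (Set.Iic (n + 1)) := by
  intro u u' h
  have hY : patchY A F y₀ u (n + 1) = patchY A F y₀ u' (n + 1) := dependsOn_patchY hA (n + 1) h
  simp only [hY, (hA (n + 1)).mono Set.Iio_subset_Iic_self h,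
    (hA n).mono (Set.Iio_subset_Iic_self.trans (Set.Iic_subset_Iic.2 n.le_succ)) h]

theorem patchY_apply_final [Fintype I] (hAmono : ∀ k u, A k u ⊆ A (k + 1) u) {T : ℕ}
    (hT : ∀ k u, T ≤ k → A k u = Finset.univ) (u : ℕ → ℝ) {m : ℕ} {x : I} (hx : x ∈ A m u) :
    patchY A F y₀ u T x = patchY A F y₀ u m x := by
  rcases le_total m T with hmT | hTm
  · exact patchY_apply_of_le hAmono u hmT hx
  · exact (patchY_apply_of_le hAmono u hTm (by simp [hT T u le_rfl])).symm

theorem setOf_unexplored_eq_inter [Fintype I] (hAmono : ∀ k u, A k u ⊆ A (k + 1) u) {T : ℕ}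
    (hT : ∀ k u, T ≤ k → A k u = Finset.univ) (n : ℕ) (η : ∀ x, 𝒳 x) :
    {u | ∀ x ∉ A n u, patchY A F y₀ u T x = η x}
      = {u | ∀ x ∈ A (n + 1) u \ A n u, patchY A F y₀ u (n + 1) x = η x}
        ∩ {u | ∀ x ∉ A (n + 1) u, patchY A F y₀ u T x = η x} := by
  ext u
  simp only [Set.mem_inter_iff, Set.mem_ofPred_eq, Finset.mem_sdiff]
  constructor
  · intro h
    exact ⟨fun x ⟨hx₁, hx⟩ => patchY_apply_final hAmono hT u hx₁ ▸ h x hx,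
      fun x hx => h x fun hxn => hx (hAmono n u hxn)⟩
  · rintro ⟨h₁, h₂⟩ x hx
    by_cases hx₁ : x ∈ A (n + 1) u
    · rw [patchY_apply_final hAmono hT u hx₁]
      exact h₁ x ⟨hx₁, hx⟩
    · exact h₂ x hx₁

end Deterministic

section OneStep

variable {I : Type*} [DecidableEq I] {𝒳 : I → Type*} [∀ x, MeasurableSpace (𝒳 x)]
  [∀ x, MeasurableSingletonClass (𝒳 x)] {A : ℕ → (ℕ → ℝ) → Finset I}
  {F : Finset I → Finset I → (∀ x, 𝒳 x) → ℝ → ∀ x, 𝒳 x} {y₀ : ∀ x, 𝒳 x}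
  {ν : Measure (∀ x, 𝒳 x)} [IsFiniteMeasure ν]

theorem setLIntegral_update_condProbOff (hA : ∀ k, DependsOn (A k) (Set.Iio k))
    (hAmono : ∀ k u, A k u ⊆ A (k + 1) u) (hFmeas : ∀ Λ J ξ, Measurable (F Λ J ξ))
    (hF : IsConditionalSampler ν F) (u : ℕ → ℝ) (n : ℕ) (η : ∀ x, 𝒳 x) :
    ∫⁻ s in Set.Ico 0 1,
        {u | ∀ x ∈ A (n + 1) u \ A n u, patchY A F y₀ u (n + 1) x = η x}.indicator
          (fun u => condProbOff ν (A (n + 1) u) (patchY A F y₀ u (n + 1)) η) (update u (n + 1) s)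
      = condProbOff ν (A n u) (patchY A F y₀ u n) η := by
  set Λ := A n u
  set B := A (n + 1) u
  set ξ := patchY A F y₀ u n
  set T := {s | ∀ x ∈ B \ Λ, F Λ (B \ Λ) ξ s x = η x}
  have hupd := exploration_update_succ (F := F) (y₀ := y₀) hA u n
  have hintegrand : ∀ s,
      {u | ∀ x ∈ A (n + 1) u \ A n u, patchY A F y₀ u (n + 1) x = η x}.indicator
          (fun u => condProbOff ν (A (n + 1) u) (patchY A F y₀ u (n + 1)) η) (update u (n + 1) s)
        = T.indicator (fun _ => condProbOff ν B ((B \ Λ).piecewise η ξ) η) s := by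
    intro s
    obtain ⟨hAn, hAn1, hY⟩ := hupd s
    have hmem : (∀ x ∈ B \ Λ, patchY A F y₀ (update u (n + 1) s) (n + 1) x = η x) ↔ s ∈ T := by
      refine forall₂_congr fun x hx => ?_
      rw [hY, Finset.piecewise_eq_of_mem _ _ _ hx]
    by_cases hs : s ∈ T
    · rw [Set.indicator_of_mem hs, Set.indicator_of_mem (by simpa [hAn, hAn1] using hmem.2 hs),
        hAn1, hY, Finset.piecewise_congr _ hs fun _ _ => rfl]
    · rw [Set.indicator_of_notMem hs,
        Set.indicator_of_notMem (by simpa [hAn, hAn1] using hmem.not.2 hs)]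
  simp only [hintegrand]
  exact setLIntegral_indicator_condProbOff hF (hAmono n u) ξ η (hFmeas _ _ _)

end OneStep

section Measurability

variable {I : Type*} [Finite I] [DecidableEq I] {𝒳 : I → Type*} [∀ x, Countable (𝒳 x)]
  [∀ x, MeasurableSpace (𝒳 x)] [∀ x, MeasurableSingletonClass (𝒳 x)]
  {A : ℕ → (ℕ → ℝ) → Finset I} {F : Finset I → Finset I → (∀ x, 𝒳 x) → ℝ → ∀ x, 𝒳 x} {y₀ : ∀ x, 𝒳 x}

theorem measurable_patchY (hAmeas : ∀ k J, MeasurableSet {u | A k u = J})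
    (hFmeas : ∀ Λ J ξ, Measurable (F Λ J ξ)) (k : ℕ) :
    Measurable fun u => patchY A F y₀ u k := by
  induction k with
  | zero => exact measurable_const
  | succ k ih =>
    have hstep : Measurable fun p : (ℕ → ℝ) × (Finset I × Finset I × ∀ x, 𝒳 x) =>
        (p.2.2.1 \ p.2.1).piecewise (F p.2.1 (p.2.2.1 \ p.2.1) p.2.2.2 (p.1 (k + 1))) p.2.2.2 := by
      refine measurable_from_prod_countable_left fun t => measurable_pi_lambda _ fun x => ?_
      by_cases hx : x ∈ t.2.1 \ t.1
      · simp only [Finset.piecewise_eq_of_mem _ _ _ hx]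
        exact (measurable_pi_apply x).comp ((hFmeas _ _ _).comp (measurable_pi_apply (k + 1)))
      · simp only [Finset.piecewise_eq_of_notMem _ _ _ hx]
        exact measurable_const
    exact hstep.comp (measurable_id.prodMk ((measurable_to_countable' (hAmeas k)).prodMk
      ((measurable_to_countable' (hAmeas (k + 1))).prodMk ih)))

theorem measurable_comp_patchY {β : Type*} [MeasurableSpace β]
    (hAmeas : ∀ k J, MeasurableSet {u | A k u = J}) (hFmeas : ∀ Λ J ξ, Measurable (F Λ J ξ))
    (f : Finset I → Finset I → (∀ x, 𝒳 x) → β) (k l m : ℕ) :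
    Measurable fun u => f (A k u) (A l u) (patchY A F y₀ u m) :=
  (measurable_of_countable fun t : Finset I × Finset I × (∀ x, 𝒳 x) => f t.1 t.2.1 t.2.2).comp
    ((measurable_to_countable' (hAmeas k)).prodMk ((measurable_to_countable' (hAmeas l)).prodMk
      (measurable_patchY hAmeas hFmeas m)))

end Measurability

section Backward

variable {I : Type*} [Fintype I] [DecidableEq I] {𝒳 : I → Type*} [∀ x, Fintype (𝒳 x)]
  [∀ x, MeasurableSpace (𝒳 x)] [∀ x, MeasurableSingletonClass (𝒳 x)]
  {A : ℕ → (ℕ → ℝ) → Finset I} {F : Finset I → Finset I → (∀ x, 𝒳 x) → ℝ → ∀ x, 𝒳 x}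
  {y₀ : ∀ x, 𝒳 x} {ν : Measure (∀ x, 𝒳 x)}

theorem setLIntegral_inter_succ [IsFiniteMeasure ν] (hA : ∀ k, DependsOn (A k) (Set.Iio k))
    (hAmono : ∀ k u, A k u ⊆ A (k + 1) u) (hAmeas : ∀ k J, MeasurableSet {u | A k u = J})
    (hFmeas : ∀ Λ J ξ, Measurable (F Λ J ξ)) (hF : IsConditionalSampler ν F) (n : ℕ)
    (η : ∀ x, 𝒳 x) {G : Set (ℕ → ℝ)} (hG : MeasurableSet G)
    (hGdep : DependsOn (· ∈ G) (Set.Iic n)) :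
    ∫⁻ u in G ∩ {u | ∀ x ∈ A (n + 1) u \ A n u, patchY A F y₀ u (n + 1) x = η x},
        condProbOff ν (A (n + 1) u) (patchY A F y₀ u (n + 1)) η ∂uniformSeq
      = ∫⁻ u in G, condProbOff ν (A n u) (patchY A F y₀ u n) η ∂uniformSeq := by
  have hR := measurableSet_setOfPred.2 (measurable_comp_patchY (y₀ := y₀) hAmeas hFmeas
    (fun Λ B ζ => ∀ x ∈ B \ Λ, ζ x = η x) n (n + 1) (n + 1))
  have hG_update : ∀ u s, update u (n + 1) s ∈ G ↔ u ∈ G := fun u s =>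
    (hGdep fun i hi => update_of_ne (by simp at hi; omega) _ _).to_iff
  rw [← lintegral_indicator (hG.inter hR), ← lintegral_indicator hG, ← Set.indicator_indicator,
    Measure.lintegral_infinitePi_eq_lintegral_update _ (n + 1)
      (((measurable_comp_patchY hAmeas hFmeas (fun Λ _ ξ => condProbOff ν Λ ξ η) (n + 1) (n + 1)
        (n + 1)).indicator hR).indicator hG)]
  refine lintegral_congr fun u => ?_
  by_cases hu : u ∈ G
  · simp only [Set.indicator_of_mem ((hG_update u _).2 hu), Set.indicator_of_mem hu]
    exact setLIntegral_update_condProbOff hA hAmono hFmeas hF u n η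
  · simp [Set.indicator_of_notMem, hu, hG_update]

theorem measure_inter_unexplored_inter_of_le [IsFiniteMeasure ν]
    (hAmono : ∀ k u, A k u ⊆ A (k + 1) u) (hAmeas : ∀ k J, MeasurableSet {u | A k u = J})
    (hFmeas : ∀ Λ J ξ, Measurable (F Λ J ξ)) {T : ℕ} (hT : ∀ k u, T ≤ k → A k u = Finset.univ)
    {N : ℕ} (hN : T ≤ N) (η : ∀ x, 𝒳 x) {G : Set (ℕ → ℝ)} :
    uniformSeq (G ∩ {u | ∀ x ∉ A N u, patchY A F y₀ u T x = η x}
        ∩ {u | ν {patchY A F y₀ u T} ≠ 0})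
      = ∫⁻ u in G, condProbOff ν (A N u) (patchY A F y₀ u N) η ∂uniformSeq := by
  have hpos := measurableSet_setOfPred.2 (measurable_comp_patchY (y₀ := y₀) hAmeas hFmeas
    (fun _ _ ζ => ν {ζ} ≠ 0) T T T)
  have hE : {u | ∀ x ∉ A N u, patchY A F y₀ u T x = η x} = Set.univ :=
    Set.eq_univ_of_forall fun u x hx => absurd (hT N u hN ▸ Finset.mem_univ x) hx
  have hYN : ∀ u, patchY A F y₀ u N = patchY A F y₀ u T := fun u =>
    funext fun x => (patchY_apply_final hAmono hT u (by simp [hT N u hN])).symm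
  rw [hE, Set.inter_univ]
  simp only [hT N _ hN, condProbOff_univ, hYN]
  change _ = ∫⁻ u in G, {u | ν {patchY A F y₀ u T} ≠ 0}.indicator 1 u ∂uniformSeq
  rw [lintegral_indicator_one hpos, Measure.restrict_apply hpos, Set.inter_comm]

theorem measure_inter_unexplored_inter [IsFiniteMeasure ν]
    (hA : ∀ k, DependsOn (A k) (Set.Iio k)) (hAmono : ∀ k u, A k u ⊆ A (k + 1) u)
    (hAmeas : ∀ k J, MeasurableSet {u | A k u = J}) {T : ℕ}
    (hT : ∀ k u, T ≤ k → A k u = Finset.univ) (hFmeas : ∀ Λ J ξ, Measurable (F Λ J ξ))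
    (hF : IsConditionalSampler ν F) (n : ℕ) (η : ∀ x, 𝒳 x) {G : Set (ℕ → ℝ)}
    (hG : MeasurableSet G) (hGdep : DependsOn (· ∈ G) (Set.Iic n)) :
    uniformSeq (G ∩ {u | ∀ x ∉ A n u, patchY A F y₀ u T x = η x}
        ∩ {u | ν {patchY A F y₀ u T} ≠ 0})
      = ∫⁻ u in G, condProbOff ν (A n u) (patchY A F y₀ u n) η ∂uniformSeq := by
  obtain ⟨d, hd⟩ : ∃ d, T ≤ n + d := ⟨T, Nat.le_add_left T n⟩
  induction d generalizing n G with
  | zero => exact measure_inter_unexplored_inter_of_le hAmono hAmeas hFmeas hT hd η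
  | succ d ih =>
    set R := {u | ∀ x ∈ A (n + 1) u \ A n u, patchY A F y₀ u (n + 1) x = η x}
    have hR : MeasurableSet R := measurableSet_setOfPred.2 (measurable_comp_patchY hAmeas hFmeas
      (fun Λ B ζ => ∀ x ∈ B \ Λ, ζ x = η x) n (n + 1) (n + 1))
    have hGR : DependsOn (· ∈ G ∩ R) (Set.Iic (n + 1)) := fun u u' h =>
      congrArg₂ And (hGdep fun i hi => h i (Set.Iic_subset_Iic.2 n.le_succ hi))
        (dependsOn_comp_patchY hA n (fun Λ B ζ => ∀ x ∈ B \ Λ, ζ x = η x) h)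
    rw [setOf_unexplored_eq_inter hAmono hT n η, ← Set.inter_assoc,
      ih (n + 1) (hG.inter hR) hGR (by omega),
      setLIntegral_inter_succ hA hAmono hAmeas hFmeas hF n η hG hGdep]

theorem measure_setOf_measure_singleton_patchY_ne_zero [IsProbabilityMeasure ν]
    (hA : ∀ k, DependsOn (A k) (Set.Iio k)) (hA0 : ∀ u, A 0 u = ∅)
    (hAmono : ∀ k u, A k u ⊆ A (k + 1) u) (hAmeas : ∀ k J, MeasurableSet {u | A k u = J})
    {T : ℕ} (hT : ∀ k u, T ≤ k → A k u = Finset.univ) (hFmeas : ∀ Λ J ξ, Measurable (F Λ J ξ))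
    (hF : IsConditionalSampler ν F) :
    uniformSeq {u | ν {patchY A F y₀ u T} ≠ 0} = 1 := by
  set Y := fun u => patchY A F y₀ u T
  have hY : Measurable Y := measurable_patchY hAmeas hFmeas T
  have hlaw : ∀ η, uniformSeq.restrict {u | ν {Y u} ≠ 0} (Y ⁻¹' {η}) = ν {η} := by
    intro η
    have h := measure_inter_unexplored_inter (y₀ := y₀) hA hAmono hAmeas hT hFmeas hF 0 η
      MeasurableSet.univ fun _ _ _ => rfl
    simp only [hA0, Finset.notMem_empty, not_false_eq_true, forall_const, Set.univ_inter,
      condProbOff_empty, setLIntegral_const, measure_univ, mul_one] at h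
    rw [Measure.restrict_apply (hY (measurableSet_singleton η)), ← h]
    congr
    ext u
    simp [Y, funext_iff]
  calc uniformSeq {u | ν {Y u} ≠ 0}
      = ∑ η, uniformSeq.restrict {u | ν {Y u} ≠ 0} (Y ⁻¹' {η}) := by
        rw [sum_measure_preimage_singleton _ fun η _ => hY (measurableSet_singleton η),
          Finset.coe_univ, Set.preimage_univ, Measure.restrict_apply_univ]
    _ = 1 := by simp only [hlaw, sum_measure_singleton, Finset.coe_univ, measure_univ]

theorem measure_inter_unexplored [IsProbabilityMeasure ν]
    (hA : ∀ k, DependsOn (A k) (Set.Iio k)) (hA0 : ∀ u, A 0 u = ∅)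
    (hAmono : ∀ k u, A k u ⊆ A (k + 1) u) (hAmeas : ∀ k J, MeasurableSet {u | A k u = J})
    {T : ℕ} (hT : ∀ k u, T ≤ k → A k u = Finset.univ) (hFmeas : ∀ Λ J ξ, Measurable (F Λ J ξ))
    (hF : IsConditionalSampler ν F) (n : ℕ) (η : ∀ x, 𝒳 x) {G : Set (ℕ → ℝ)}
    (hG : MeasurableSet G) (hGdep : DependsOn (· ∈ G) (Set.Iic n)) :
    uniformSeq (G ∩ {u | ∀ x ∉ A n u, patchY A F y₀ u T x = η x})
      = ∫⁻ u in G, condProbOff ν (A n u) (patchY A F y₀ u n) η ∂uniformSeq := by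
  have hpos := measurableSet_setOfPred.2 (measurable_comp_patchY (y₀ := y₀) hAmeas hFmeas
    (fun _ _ ζ => ν {ζ} ≠ 0) T T T)
  rw [← measure_inter_conull ((prob_compl_eq_zero_iff hpos).2
      (measure_setOf_measure_singleton_patchY_ne_zero hA hA0 hAmono hAmeas hT hFmeas hF)),
    measure_inter_unexplored_inter hA hAmono hAmeas hT hFmeas hF n η hG hGdep]

end Backward

/-- The conditional law given `U_0, …, U_{n-1}` is stated in integrated form, against the events
`{(U_0, …, U_{n-1}) ∈ S}`. -/
theorem stmt8_general {I : Type*} [Fintype I] [DecidableEq I]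
    {𝒳 : I → Type*} [∀ x, Fintype (𝒳 x)] [∀ x, MeasurableSpace (𝒳 x)]
    [∀ x, DiscreteMeasurableSpace (𝒳 x)]
    {Ω : Type*} [MeasurableSpace Ω] (μ : Measure Ω) [IsProbabilityMeasure μ]
    (X : Ω → ∀ x, 𝒳 x) (hX : Measurable X)
    (U : ℕ → Ω → ℝ) (hUmeas : ∀ n, Measurable (U n))
    (hUindep : iIndepFun U μ)
    (hUlaw : ∀ n, μ.map (U n) = volume.restrict (Set.Ico (0:ℝ) 1))
    (A : ℕ → (ℕ → ℝ) → Finset I)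
    (hA0 : ∀ u, A 0 u = ∅)
    (hAmono : ∀ k u, A k u ⊆ A (k + 1) u)
    (hAprefix : ∀ k u u', (∀ i < k, u i = u' i) → A k u = A k u')
    (hAmeas : ∀ k (J : Finset I), MeasurableSet {u : ℕ → ℝ | A k u = J})
    (Tstar : ℕ) (hT : ∀ k u, Tstar ≤ k → A k u = Finset.univ)
    (F : Finset I → Finset I → (∀ x, 𝒳 x) → ℝ → ∀ x, 𝒳 x)
    (hFmeas : ∀ Λ J ξ, Measurable (F Λ J ξ))
    (hFlaw : ∀ (Λ J : Finset I), Disjoint Λ J → ∀ ξ : ∀ x, 𝒳 x,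
      μ.map X {σ | ∀ x ∈ Λ, σ x = ξ x} ≠ 0 →
      ∀ η : ∀ x, 𝒳 x,
        volume {u ∈ Set.Ico (0:ℝ) 1 | ∀ x ∈ J, F Λ J ξ u x = η x}
          = (μ.map X)[|{σ | ∀ x ∈ Λ, σ x = ξ x}] {σ | ∀ x ∈ J, σ x = η x})
    (y₀ : ∀ x, 𝒳 x) :
    ∀ (n : ℕ) (S : Set (Fin n → ℝ)), MeasurableSet S → ∀ η : ∀ x, 𝒳 x,
      μ {ω | (fun i : Fin n => U i ω) ∈ S ∧
            ∀ x ∉ A n (fun j => U j ω), patchY A F y₀ (fun j => U j ω) Tstar x = η x}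
        = ∫⁻ ω in {ω | (fun i : Fin n => U i ω) ∈ S},
            (μ.map X)[|{σ | ∀ x ∈ A n (fun j => U j ω),
                  σ x = patchY A F y₀ (fun j => U j ω) n x}]
              {σ | ∀ x ∉ A n (fun j => U j ω), σ x = η x} ∂μ := by
  intro n S hS η
  have := Measure.isProbabilityMeasure_map (μ := μ) hX.aemeasurable
  have hW : Measurable fun ω j => U j ω := measurable_pi_lambda _ hUmeas
  have hlaw : μ.map (fun ω j => U j ω) = uniformSeq := by
    simp_rw [hUindep.map_fun_eq_infinitePi_map hUmeas, hUlaw]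
  set G : Set (ℕ → ℝ) := {u | (fun i : Fin n => u i) ∈ S}
  have hG : MeasurableSet G := (measurable_pi_lambda _ fun i => measurable_pi_apply _) hS
  have hGdep : DependsOn (· ∈ G) (Set.Iic n) := fun u u' h => by
    change ((fun i : Fin n => u i) ∈ S) = ((fun i : Fin n => u' i) ∈ S)
    rw [funext fun i : Fin n => h i (Set.mem_Iic.2 i.2.le)]
  have hE := measurableSet_setOfPred.2 (measurable_comp_patchY (y₀ := y₀) hAmeas hFmeas
    (fun Λ _ ζ => ∀ x ∉ Λ, ζ x = η x) n n Tstar)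
  have hg := measurable_comp_patchY (y₀ := y₀) hAmeas hFmeas
    (fun Λ _ ξ => condProbOff (μ.map X) Λ ξ η) n n n
  change μ ((fun ω j => U j ω) ⁻¹' (G ∩ {u | ∀ x ∉ A n u, patchY A F y₀ u Tstar x = η x}))
    = ∫⁻ ω in (fun ω j => U j ω) ⁻¹' G,
        condProbOff (μ.map X) (A n fun j => U j ω) (patchY A F y₀ (fun j => U j ω) n) η ∂μ
  rw [← Measure.map_apply hW (hG.inter hE), ← setLIntegral_map hG hg hW, hlaw]
  exact measure_inter_unexplored (fun k _ _ h => hAprefix k _ _ h) hA0 hAmono hAmeas hT hFmeas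
    hFlaw n η hG hGdep

/-- **Conditional law of the unexplored part at a deterministic time.**
In the patch exploration setting, for every deterministic `n ≥ 0`, the conditional law of
`Y_{I ∖ 𝒜_n}` given `U_0, …, U_{n-1}` is a.s. the conditional law of `X_{I ∖ 𝒜_n}` given
`X_{𝒜_n} = Y_{𝒜_n}`. This is expressed in integrated form: for every measurable set `S`
of values of `(U_0, …, U_{n-1})` and every configuration `η`,
`P((U_0,…,U_{n-1}) ∈ S, Y = η off 𝒜_n) = ∫_{(U_0,…,U_{n-1}) ∈ S} P(X = η off 𝒜_n | X = Y on 𝒜_n) dP`. -/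
theorem stmt8 {I : Type*} [Fintype I] [DecidableEq I]
    {𝒳 : I → Type*} [∀ x, Fintype (𝒳 x)] [∀ x, MeasurableSpace (𝒳 x)]
    [∀ x, DiscreteMeasurableSpace (𝒳 x)]
    {Ω : Type*} [MeasurableSpace Ω] (μ : Measure Ω) [IsProbabilityMeasure μ]
    (X : Ω → ∀ x, 𝒳 x) (hX : Measurable X)
    (U : ℕ → Ω → ℝ) (hUmeas : ∀ n, Measurable (U n))
    (hUindep : iIndepFun U μ)
    (hUlaw : ∀ n, μ.map (U n) = volume.restrict (Set.Ico (0:ℝ) 1))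
    (A : ℕ → (ℕ → ℝ) → Finset I)
    (hA0 : ∀ u, A 0 u = ∅)
    (hAmono : ∀ k u, A k u ⊆ A (k + 1) u)
    (hAprefix : ∀ k u u', (∀ i < k, u i = u' i) → A k u = A k u')
    (hAmeas : ∀ k (J : Finset I), MeasurableSet {u : ℕ → ℝ | A k u = J})
    (Tstar : ℕ) (hT : ∀ k u, Tstar ≤ k → A k u = Finset.univ)
    (F : Finset I → Finset I → (∀ x, 𝒳 x) → ℝ → ∀ x, 𝒳 x)
    (hFmeas : ∀ Λ J ξ, Measurable (F Λ J ξ))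
    (hFrestrict : ∀ Λ J ξ ξ', (∀ x ∈ Λ, ξ x = ξ' x) → F Λ J ξ = F Λ J ξ')
    (hFlaw : ∀ (Λ J : Finset I), Disjoint Λ J → ∀ ξ : ∀ x, 𝒳 x,
      μ.map X {σ | ∀ x ∈ Λ, σ x = ξ x} ≠ 0 →
      ∀ η : ∀ x, 𝒳 x,
        volume {u ∈ Set.Ico (0:ℝ) 1 | ∀ x ∈ J, F Λ J ξ u x = η x}
          = (μ.map X)[|{σ | ∀ x ∈ Λ, σ x = ξ x}] {σ | ∀ x ∈ J, σ x = η x})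
    (y₀ : ∀ x, 𝒳 x) :
    ∀ (n : ℕ) (S : Set (Fin n → ℝ)), MeasurableSet S → ∀ η : ∀ x, 𝒳 x,
      μ {ω | (fun i : Fin n => U i ω) ∈ S ∧
            ∀ x ∉ A n (fun j => U j ω), patchY A F y₀ (fun j => U j ω) Tstar x = η x}
        = ∫⁻ ω in {ω | (fun i : Fin n => U i ω) ∈ S},
            (μ.map X)[|{σ | ∀ x ∈ A n (fun j => U j ω),
                  σ x = patchY A F y₀ (fun j => U j ω) n x}]
              {σ | ∀ x ∉ A n (fun j => U j ω), σ x = η x} ∂μ :=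
  stmt8_general μ X hX U hUmeas hUindep hUlaw A hA0 hAmono hAprefix hAmeas Tstar hT F hFmeas hFlaw
    y₀

end
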